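/- arXiv:2109.04878 — 3 statements merged into one kernel-verified Lean document; each statement's English description precedes it below -/
import Mathlib

section
/- Let f, g : Ω → ℝ with f ≤ g, x interior to Ω, and suppose the Markov right derivative of F(t) = [f(t), g(t)] exists at x. Suppose there exist α, β, c, d : Ω → ℝ and μ > 0 such that: α·f + β·g = c + d on Ω ∩ (x, ∞); α, β, c are continuous on Ω ∩ (x, ∞); |α(t)| + |β(t)| ≤ μ and μ·|α(t) - β(t)| ≥ 1 for all t ∈ Ω; d(x) = 0 and the right derivative d'₊(x) = 0. Then the right derivatives f'₊(x) and g'₊(x) exist. -/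
open Set Filter Topology

/-!
Let `S`, `T` be the right difference quotients of `f` and `g` at `x`. The Markov derivative gives
the limits of `min S T` and `max S T`, hence of `S + T` and of `|S - T|`, so it suffices that
`S - T` converges. Dividing `α f + β g = c + d` by `t - x` and using `|α + β| ≤ μ`,
`|α - β| ≥ 1 / μ` writes `S - T` as a function continuous on `Ω ∩ (x, ∞)` plus a term tending
to `0`. A continuous function whose modulus tends to a positive limit has no zero near `x`, so by
connectedness it keeps one sign there, and then it converges.
-/

theorem tendsto_or_tendsto_neg_of_tendsto_abs_of_continuousOn {K : ℝ → ℝ} {s : Set ℝ} {x Δ : ℝ}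
    (hs : s ∈ 𝓝[>] x) (hK : ContinuousOn K s)
    (habs : Tendsto (fun t => |K t|) (𝓝[>] x) (𝓝 Δ)) :
    Tendsto K (𝓝[>] x) (𝓝 Δ) ∨ Tendsto K (𝓝[>] x) (𝓝 (-Δ)) := by
  rcases (ge_of_tendsto' habs fun t => abs_nonneg (K t)).eq_or_lt with rfl | hΔ
  · exact Or.inl ((tendsto_zero_iff_abs_tendsto_zero K).2 habs)
  obtain ⟨u, hxu, hu⟩ :=
    mem_nhdsGT_iff_exists_Ioo_subset.1 (inter_mem hs (habs.eventually (lt_mem_nhds hΔ)))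
  have hKu : ContinuousOn K (Ioo x u) := hK.mono fun t ht => (hu ht).1
  rcases isPreconnected_Ioo.eq_or_eq_neg_of_sq_eq hKu hKu.abs (fun t _ => (sq_abs (K t)).symm)
      (fun ht => ((hu ht).2 : 0 < |K _|).ne') with h | h
  · exact Or.inl (habs.congr' (eventuallyEq_of_mem (Ioo_mem_nhdsGT hxu) h.symm))
  · exact Or.inr (habs.neg.congr' (eventuallyEq_of_mem (Ioo_mem_nhdsGT hxu) h.symm))

theorem exists_tendsto_of_tendsto_abs_of_tendsto_sub_continuousOn {u K : ℝ → ℝ} {s : Set ℝ}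
    {x Δ : ℝ} (hs : s ∈ 𝓝[>] x) (hK : ContinuousOn K s)
    (huK : Tendsto (fun t => u t - K t) (𝓝[>] x) (𝓝 0))
    (habs : Tendsto (fun t => |u t|) (𝓝[>] x) (𝓝 Δ)) :
    ∃ M, Tendsto u (𝓝[>] x) (𝓝 M) := by
  have habs_sub : Tendsto (fun t => |u t| - |K t|) (𝓝[>] x) (𝓝 0) :=
    squeeze_zero_norm (fun t => abs_abs_sub_abs_le_abs_sub (u t) (K t)) (huK.abs.trans (by simp))
  have hKabs : Tendsto (fun t => |K t|) (𝓝[>] x) (𝓝 Δ) := by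
    simpa using habs.sub habs_sub
  rcases tendsto_or_tendsto_neg_of_tendsto_abs_of_continuousOn hs hK hKabs with h | h
  · exact ⟨Δ, by simpa using h.add huK⟩
  · exact ⟨-Δ, by simpa using h.add huK⟩

theorem exists_continuousOn_tendsto_sub_sub_zero_of_mul_add_mul_eq {s : Set ℝ} {l : Filter ℝ}
    (hs : s ∈ l) {S T α β C e : ℝ → ℝ} {μ P : ℝ}
    (hrel : ∀ t ∈ s, α t * S t + β t * T t = C t + e t)
    (hα : ContinuousOn α s) (hβ : ContinuousOn β s) (hC : ContinuousOn C s)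
    (hμ₁ : ∀ t ∈ s, |α t + β t| ≤ μ) (hμ₂ : ∀ t ∈ s, 1 ≤ μ * |α t - β t|)
    (hadd : Tendsto (fun t => S t + T t) l (𝓝 P)) (he : Tendsto e l (𝓝 0)) :
    ∃ K, ContinuousOn K s ∧ Tendsto (fun t => S t - T t - K t) l (𝓝 0) := by
  have hne : ∀ t ∈ s, α t - β t ≠ 0 := fun t ht h => absurd (hμ₂ t ht) (by simp [h])
  -- `(α - β) (S - T) = 2 (α S + β T) - (α + β) (S + T)`, and `S + T` is close to `P`.
  refine ⟨fun t => (2 * C t - (α t + β t) * P) / (α t - β t),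
    ContinuousOn.div (by fun_prop) (by fun_prop) hne, ?_⟩
  have hsum : Tendsto (fun t => 2 * e t - (S t + T t - P) * (α t + β t)) l (𝓝 0) := by
    have hsum₀ : Tendsto (fun t => S t + T t - P) l (𝓝 0) := by simpa using hadd.sub_const P
    simpa using (he.const_mul 2).sub (hsum₀.zero_mul_isBoundedUnder_le
      (isBoundedUnder_of_eventually_le (eventually_of_mem hs hμ₁)))
  have hinv : ∀ t ∈ s, |(α t - β t)⁻¹| ≤ μ := fun t ht => by
    rw [abs_inv, inv_le_iff_one_le_mul₀ (abs_pos.2 (hne t ht))]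
    exact hμ₂ t ht
  refine (hsum.zero_mul_isBoundedUnder_le (isBoundedUnder_of_eventually_le
    (eventually_of_mem hs hinv))).congr' (eventually_of_mem hs fun t ht => ?_)
  have := hrel t ht
  field_simp [hne t ht]
  linear_combination (-2) * this

theorem stmt7_general (Ω : Set ℝ) (f g α β c d : ℝ → ℝ) (x μ : ℝ) (hx : x ∈ interior Ω)
    (hmin : ∃ L₁ : ℝ, Tendsto (fun t => min (f t - f x) (g t - g x) / (t - x))
      (𝓝[Ω ∩ Set.Ioi x] x) (𝓝 L₁))
    (hmax : ∃ L₂ : ℝ, Tendsto (fun t => max (f t - f x) (g t - g x) / (t - x))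
      (𝓝[Ω ∩ Set.Ioi x] x) (𝓝 L₂))
    (heq : ∀ t ∈ Ω ∩ Set.Ioi x, α t * f t + β t * g t = c t + d t)
    (hα : ContinuousOn α (Ω ∩ Set.Ioi x)) (hβ : ContinuousOn β (Ω ∩ Set.Ioi x))
    (hc : ContinuousOn c (Ω ∩ Set.Ioi x))
    (hμ1 : ∀ t ∈ Ω, |α t| + |β t| ≤ μ)
    (hμ2 : ∀ t ∈ Ω, 1 ≤ μ * |α t - β t|)
    (hdx : d x = 0)
    (hd' : Tendsto (fun t => (d t - d x) / (t - x)) (𝓝[Ω ∩ Set.Ioi x] x) (𝓝 0)) :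
    (∃ L : ℝ, Tendsto (fun t => (f t - f x) / (t - x)) (𝓝[Ω ∩ Set.Ioi x] x) (𝓝 L)) ∧
    (∃ L : ℝ, Tendsto (fun t => (g t - g x) / (t - x)) (𝓝[Ω ∩ Set.Ioi x] x) (𝓝 L)) := by
  obtain ⟨L₁, hmin⟩ := hmin
  obtain ⟨L₂, hmax⟩ := hmax
  have hΩ : Ω ∈ 𝓝[>] x := mem_nhdsWithin_of_mem_nhds (mem_interior_iff_mem_nhds.1 hx)
  rw [nhdsWithin_inter_of_mem hΩ] at hmin hmax hd' ⊢
  set S := fun t => (f t - f x) / (t - x)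
  set T := fun t => (g t - g x) / (t - x)
  have hpos : ∀ᶠ t in 𝓝[>] x, 0 ≤ t - x :=
    eventually_nhdsWithin_of_forall fun t ht => sub_nonneg.2 (le_of_lt ht)
  have hmin' : Tendsto (fun t => min (S t) (T t)) (𝓝[>] x) (𝓝 L₁) :=
    hmin.congr' (hpos.mono fun t ht => (min_div_div_right ht _ _).symm)
  have hmax' : Tendsto (fun t => max (S t) (T t)) (𝓝[>] x) (𝓝 L₂) :=
    hmax.congr' (hpos.mono fun t ht => (max_div_div_right ht _ _).symm)
  have hadd : Tendsto (fun t => S t + T t) (𝓝[>] x) (𝓝 (L₁ + L₂)) :=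
    (hmin'.add hmax').congr fun t => min_add_max _ _
  have habs : Tendsto (fun t => |S t - T t|) (𝓝[>] x) (𝓝 (L₂ - L₁)) :=
    (hmax'.sub hmin').congr fun t => max_sub_min_eq_abs' _ _
  have hright : Ω ∩ Ioi x ∈ 𝓝[>] x := inter_mem hΩ self_mem_nhdsWithin
  have hrel : ∀ t ∈ Ω ∩ Ioi x, α t * S t + β t * T t =
      (c t - α t * f x - β t * g x) / (t - x) + d t / (t - x) := fun t ht => by
    have hne : t - x ≠ 0 := sub_ne_zero.2 (mem_Ioi.1 ht.2).ne'
    simp only [S, T]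
    field_simp
    linear_combination heq t ht
  obtain ⟨K, hKcont, hK⟩ := exists_continuousOn_tendsto_sub_sub_zero_of_mul_add_mul_eq hright hrel
    hα hβ (ContinuousOn.div (by fun_prop) (by fun_prop) fun t ht => sub_ne_zero.2 (mem_Ioi.1 ht.2).ne')
    (fun t ht => (abs_add_le _ _).trans (hμ1 t ht.1)) (fun t ht => hμ2 t ht.1)
    hadd (by simpa [hdx] using hd')
  obtain ⟨M, hM⟩ :=
    exists_tendsto_of_tendsto_abs_of_tendsto_sub_continuousOn hright hKcont hK habs
  exact ⟨⟨_, ((hadd.add hM).div_const 2).congr fun t => by ring⟩,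
    ⟨_, ((hadd.sub hM).div_const 2).congr fun t => by ring⟩⟩

theorem stmt7 (Ω : Set ℝ) (f g α β c d : ℝ → ℝ) (x μ : ℝ) (hx : x ∈ interior Ω)
    (hfg : ∀ t ∈ Ω, f t ≤ g t) (hμ : 0 < μ)
    (hmin : ∃ L₁ : ℝ, Tendsto (fun t => min (f t - f x) (g t - g x) / (t - x))
      (𝓝[Ω ∩ Set.Ioi x] x) (𝓝 L₁))
    (hmax : ∃ L₂ : ℝ, Tendsto (fun t => max (f t - f x) (g t - g x) / (t - x))
      (𝓝[Ω ∩ Set.Ioi x] x) (𝓝 L₂))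
    (heq : ∀ t ∈ Ω ∩ Set.Ioi x, α t * f t + β t * g t = c t + d t)
    (hα : ContinuousOn α (Ω ∩ Set.Ioi x)) (hβ : ContinuousOn β (Ω ∩ Set.Ioi x))
    (hc : ContinuousOn c (Ω ∩ Set.Ioi x))
    (hμ1 : ∀ t ∈ Ω, |α t| + |β t| ≤ μ)
    (hμ2 : ∀ t ∈ Ω, 1 ≤ μ * |α t - β t|)
    (hdx : d x = 0)
    (hd' : Tendsto (fun t => (d t - d x) / (t - x)) (𝓝[Ω ∩ Set.Ioi x] x) (𝓝 0)) :
    (∃ L : ℝ, Tendsto (fun t => (f t - f x) / (t - x)) (𝓝[Ω ∩ Set.Ioi x] x) (𝓝 L)) ∧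
    (∃ L : ℝ, Tendsto (fun t => (g t - g x) / (t - x)) (𝓝[Ω ∩ Set.Ioi x] x) (𝓝 L)) :=
  stmt7_general Ω f g α β c d x μ hx hmin hmax heq hα hβ hc hμ1 hμ2 hdx hd'
end

section
/- Let f, g : Ω → ℝ with f ≤ g, x interior to Ω, and suppose the Markov left derivative of F(t) = [f(t), g(t)] exists at x. Suppose there exist α, β, c, d : Ω → ℝ and μ > 0 such that: α·f + β·g = c + d on Ω ∩ (-∞, x); α, β, c are continuous on Ω ∩ (-∞, x); |α(t)| + |β(t)| ≤ μ and μ·|α(t) - β(t)| ≥ 1 for all t ∈ Ω; d(x) = 0 and the left derivative d'₋(x) = 0. Then the left derivatives f'₋(x) and g'₋(x) exist. -/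
/-!
Write `q` and `r` for the left difference quotients of `f + g` and `f - g` at `x`. Since
`min + max = a + b` and `max - min = |a - b|`, the Markov derivative gives the limits of `q` and
of `|r|`. Solving the relation `α f + β g = c + d` for `f - g` writes `r = G + o(1)` with `G`
continuous left of `x`; the bounds `|α + β| ≤ μ` and `|α - β| ≥ 1 / μ` control the error term.
Then `|G|` has the same limit `ℓ` as `|r|`, and if `ℓ > 0` the continuous `G` is eventually
nonzero on an interval, hence of constant sign there, so `G`, and with it `r`, converges to `±ℓ`.
Finally `f` and `g` have quotients `(q ± r) / 2`.
-/

open Set Filter Topology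

section MinMax

variable {ι : Type*} {l : Filter ι} {a b h : ι → ℝ} {L₁ L₂ : ℝ}

theorem tendsto_add_div_of_tendsto_min_max
    (hmin : Tendsto (fun t => min (a t) (b t) / h t) l (𝓝 L₁))
    (hmax : Tendsto (fun t => max (a t) (b t) / h t) l (𝓝 L₂)) :
    Tendsto (fun t => (a t + b t) / h t) l (𝓝 (L₁ + L₂)) :=
  (hmin.add hmax).congr fun t => by rw [← add_div, min_add_max]

theorem tendsto_abs_sub_div_of_tendsto_min_max (hh : ∀ᶠ t in l, h t < 0)
    (hmin : Tendsto (fun t => min (a t) (b t) / h t) l (𝓝 L₁))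
    (hmax : Tendsto (fun t => max (a t) (b t) / h t) l (𝓝 L₂)) :
    Tendsto (fun t => |(a t - b t) / h t|) l (𝓝 (L₁ - L₂)) := by
  refine (hmin.sub hmax).congr' (hh.mono fun t ht => ?_)
  dsimp only
  rw [← sub_div, abs_div, abs_of_neg ht, ← max_sub_min_eq_abs', div_neg, ← neg_div, neg_sub]

end MinMax

theorem exists_tendsto_nhdsLT_of_tendsto_abs {G : ℝ → ℝ} {s : Set ℝ} {b ℓ : ℝ}
    (hG : ContinuousOn G s) (hs : s ∈ 𝓝[<] b)
    (h : Tendsto (fun t => |G t|) (𝓝[<] b) (𝓝 ℓ)) : ∃ L, Tendsto G (𝓝[<] b) (𝓝 L) := by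
  rcases (ge_of_tendsto' h fun _ => abs_nonneg _).eq_or_lt with hℓ | hℓ
  · exact ⟨0, (tendsto_zero_iff_abs_tendsto_zero G).2 (hℓ ▸ h)⟩
  obtain ⟨a, hab, hsub⟩ := mem_nhdsLT_iff_exists_Ioo_subset.1
    (inter_mem hs (h.eventually_const_lt hℓ))
  have hIoo : Ioo a b ∈ 𝓝[<] b := Ioo_mem_nhdsLT hab
  rcases isPreconnected_Ioo.eq_or_eq_neg_of_sq_eq (hG.mono fun t ht => (hsub ht).1)
      (hG.abs.mono fun t ht => (hsub ht).1) (fun t _ => (sq_abs (G t)).symm)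
      (fun ht => (hsub ht).2.ne') with hpos | hneg
  · exact ⟨ℓ, h.congr' (mem_of_superset hIoo fun t ht => (hpos ht).symm)⟩
  · exact ⟨-ℓ, h.neg.congr' (mem_of_superset hIoo fun t ht => (hneg ht).symm)⟩

theorem exists_tendsto_nhdsLT_of_tendsto_abs_of_tendsto_sub {r G : ℝ → ℝ} {s : Set ℝ}
    {b ℓ : ℝ} (hG : ContinuousOn G s) (hs : s ∈ 𝓝[<] b)
    (hr : Tendsto (fun t => |r t|) (𝓝[<] b) (𝓝 ℓ))
    (hrG : Tendsto (fun t => r t - G t) (𝓝[<] b) (𝓝 0)) : ∃ L, Tendsto r (𝓝[<] b) (𝓝 L) := by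
  have hrG' : Tendsto (fun t => dist (r t) (G t)) (𝓝[<] b) (𝓝 0) := by
    simpa only [Real.dist_eq, abs_zero] using hrG.abs
  have hGabs : Tendsto (fun t => |G t|) (𝓝[<] b) (𝓝 ℓ) :=
    hr.congr_dist (squeeze_zero (fun _ => dist_nonneg)
      (fun t => (abs_abs_sub_abs_le_abs_sub _ _)) hrG')
  obtain ⟨L, hL⟩ := exists_tendsto_nhdsLT_of_tendsto_abs hG hs hGabs
  exact ⟨L, hL.congr_dist (by simpa only [dist_comm] using hrG')⟩

theorem exists_continuousOn_tendsto_slope_sub_sub_of_relation {s : Set ℝ}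
    {f g α β c d : ℝ → ℝ} {x μ S : ℝ} (hxs : x ∉ s)
    (heq : ∀ t ∈ s, α t * f t + β t * g t = c t + d t)
    (hα : ContinuousOn α s) (hβ : ContinuousOn β s) (hc : ContinuousOn c s)
    (hμ1 : ∀ t ∈ s, |α t| + |β t| ≤ μ) (hμ2 : ∀ t ∈ s, 1 ≤ μ * |α t - β t|)
    (hd : Tendsto (fun t => (d t - d x) / (t - x)) (𝓝[s] x) (𝓝 0))
    (hS : Tendsto (fun t => ((f t - f x) + (g t - g x)) / (t - x)) (𝓝[s] x) (𝓝 S)) :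
    ∃ G : ℝ → ℝ, ContinuousOn G s ∧
      Tendsto (fun t => ((f t - f x) - (g t - g x)) / (t - x) - G t) (𝓝[s] x) (𝓝 0) := by
  have hsub : ∀ t ∈ s, α t - β t ≠ 0 := fun t ht hzero => by
    have h := hμ2 t ht
    rw [hzero, abs_zero, mul_zero] at h
    linarith
  have htx : ∀ t ∈ s, t - x ≠ 0 := fun t ht => sub_ne_zero.2 (ne_of_mem_of_not_mem ht hxs)
  -- `(α - β) (f - g) = 2 (c + d) - (α + β) (f + g)`; `G` collects the terms that stay continuous
  -- once `d t` is split as `d x + (d t - d x)` and the quotient of `f + g` replaced by its limit.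
  refine ⟨fun t => (2 * ((c t + d x - α t * f x - β t * g x) / (t - x)) - (α t + β t) * S) *
    (α t - β t)⁻¹, ?_, ?_⟩
  · refine ContinuousOn.mul ?_ ((hα.sub hβ).inv₀ hsub)
    fun_prop (disch := assumption)
  · have hnum : Tendsto (fun t => 2 * ((d t - d x) / (t - x)) -
        (α t + β t) * (((f t - f x) + (g t - g x)) / (t - x) - S)) (𝓝[s] x) (𝓝 0) := by
      have hb : IsBoundedUnder (· ≤ ·) (𝓝[s] x) (norm ∘ fun t => α t + β t) :=
        isBoundedUnder_of_eventually_le (a := μ) <| eventually_nhdsWithin_of_forall fun t ht =>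
          (abs_add_le _ _).trans (hμ1 t ht)
      simpa using (hd.const_mul 2).sub
        (isBoundedUnder_le_mul_tendsto_zero hb (tendsto_sub_nhds_zero_iff.2 hS))
    have hinv : IsBoundedUnder (· ≤ ·) (𝓝[s] x) (norm ∘ fun t => (α t - β t)⁻¹) := by
      refine isBoundedUnder_of_eventually_le (a := μ) <|
        eventually_nhdsWithin_of_forall fun t ht => ?_
      simp only [Function.comp_apply, Real.norm_eq_abs, abs_inv]
      exact (inv_le_iff_one_le_mul₀ (abs_pos.2 (hsub t ht))).2 (hμ2 t ht)
    refine (hnum.zero_mul_isBoundedUnder_le hinv).congr' <|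
      eventually_nhdsWithin_of_forall fun t ht => ?_
    field_simp [htx t ht, hsub t ht]
    linear_combination -2 * heq t ht

theorem stmt8_general (Ω : Set ℝ) (f g α β c d : ℝ → ℝ) (x μ : ℝ) (hx : x ∈ interior Ω)
    (hmin : ∃ L₁ : ℝ, Tendsto (fun t => min (f t - f x) (g t - g x) / (t - x))
      (𝓝[Ω ∩ Set.Iio x] x) (𝓝 L₁))
    (hmax : ∃ L₂ : ℝ, Tendsto (fun t => max (f t - f x) (g t - g x) / (t - x))
      (𝓝[Ω ∩ Set.Iio x] x) (𝓝 L₂))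
    (heq : ∀ t ∈ Ω ∩ Set.Iio x, α t * f t + β t * g t = c t + d t)
    (hα : ContinuousOn α (Ω ∩ Set.Iio x)) (hβ : ContinuousOn β (Ω ∩ Set.Iio x))
    (hc : ContinuousOn c (Ω ∩ Set.Iio x))
    (hμ1 : ∀ t ∈ Ω, |α t| + |β t| ≤ μ)
    (hμ2 : ∀ t ∈ Ω, 1 ≤ μ * |α t - β t|)
    (hd' : Tendsto (fun t => (d t - d x) / (t - x)) (𝓝[Ω ∩ Set.Iio x] x) (𝓝 0)) :
    (∃ L : ℝ, Tendsto (fun t => (f t - f x) / (t - x)) (𝓝[Ω ∩ Set.Iio x] x) (𝓝 L)) ∧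
    (∃ L : ℝ, Tendsto (fun t => (g t - g x) / (t - x)) (𝓝[Ω ∩ Set.Iio x] x) (𝓝 L)) := by
  obtain ⟨L₁, hmin⟩ := hmin
  obtain ⟨L₂, hmax⟩ := hmax
  have hlt : ∀ᶠ t in 𝓝[Ω ∩ Iio x] x, t - x < 0 :=
    eventually_nhdsWithin_of_forall fun t ht => sub_neg.2 ht.2
  have hsum := tendsto_add_div_of_tendsto_min_max hmin hmax
  have habs := tendsto_abs_sub_div_of_tendsto_min_max hlt hmin hmax
  obtain ⟨G, hG, hdiff⟩ := exists_continuousOn_tendsto_slope_sub_sub_of_relation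
    (fun h => (mem_Iio.1 h.2).false) heq hα hβ hc (fun t ht => hμ1 t ht.1)
    (fun t ht => hμ2 t ht.1) hd' hsum
  have hl : 𝓝[Ω ∩ Iio x] x = 𝓝[<] x :=
    nhdsWithin_inter_of_mem (mem_nhdsWithin_of_mem_nhds (mem_interior_iff_mem_nhds.1 hx))
  rw [hl] at habs hdiff
  obtain ⟨R, hR⟩ := exists_tendsto_nhdsLT_of_tendsto_abs_of_tendsto_sub hG
    (hl ▸ self_mem_nhdsWithin) habs hdiff
  rw [← hl] at hR
  exact ⟨⟨(L₁ + L₂ + R) / 2, ((hsum.add hR).div_const 2).congr fun t => by ring⟩,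
    ⟨(L₁ + L₂ - R) / 2, ((hsum.sub hR).div_const 2).congr fun t => by ring⟩⟩

theorem stmt8 (Ω : Set ℝ) (f g α β c d : ℝ → ℝ) (x μ : ℝ) (hx : x ∈ interior Ω)
    (hfg : ∀ t ∈ Ω, f t ≤ g t) (hμ : 0 < μ)
    (hmin : ∃ L₁ : ℝ, Tendsto (fun t => min (f t - f x) (g t - g x) / (t - x))
      (𝓝[Ω ∩ Set.Iio x] x) (𝓝 L₁))
    (hmax : ∃ L₂ : ℝ, Tendsto (fun t => max (f t - f x) (g t - g x) / (t - x))
      (𝓝[Ω ∩ Set.Iio x] x) (𝓝 L₂))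
    (heq : ∀ t ∈ Ω ∩ Set.Iio x, α t * f t + β t * g t = c t + d t)
    (hα : ContinuousOn α (Ω ∩ Set.Iio x)) (hβ : ContinuousOn β (Ω ∩ Set.Iio x))
    (hc : ContinuousOn c (Ω ∩ Set.Iio x))
    (hμ1 : ∀ t ∈ Ω, |α t| + |β t| ≤ μ)
    (hμ2 : ∀ t ∈ Ω, 1 ≤ μ * |α t - β t|)
    (hdx : d x = 0)
    (hd' : Tendsto (fun t => (d t - d x) / (t - x)) (𝓝[Ω ∩ Set.Iio x] x) (𝓝 0)) :
    (∃ L : ℝ, Tendsto (fun t => (f t - f x) / (t - x)) (𝓝[Ω ∩ Set.Iio x] x) (𝓝 L)) ∧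
    (∃ L : ℝ, Tendsto (fun t => (g t - g x) / (t - x)) (𝓝[Ω ∩ Set.Iio x] x) (𝓝 L)) :=
  stmt8_general Ω f g α β c d x μ hx hmin hmax heq hα hβ hc hμ1 hμ2 hd'
end

section
/- Suppose a̲ ≤ ā are real numbers, ε > 0, μ > 0, and t > x. Suppose real numbers f_p, f_q, g_p, g_q, d_p, d_q, α, β, c, f₀, g₀ satisfy: |d_p| ≤ ε(t-x), |d_q| ≤ ε(t-x), |(f_p - f₀)/(t-x) - a̲| ≤ ε, |(f_q - f₀)/(t-x) - ā| ≤ ε, |(g_q - g₀)/(t-x) - a̲| ≤ ε, |(g_p - g₀)/(t-x) - ā| ≤ ε, α·f_p + β·g_p = c + d_p, α·f_q + β·g_q = c + d_q, |α| + |β| ≤ μ, and μ·|α - β| ≥ 1. Then ā - a̲ ≤ 2μ(1 + μ)ε. -/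
theorem stmt15 (al au ε μ t x fp fq gp gq dp dq α β c f₀ g₀ : ℝ)
    (hle : al ≤ au) (hε : 0 < ε) (hμ : 0 < μ) (htx : x < t)
    (hdp : |dp| ≤ ε * (t - x)) (hdq : |dq| ≤ ε * (t - x))
    (hfp : |(fp - f₀) / (t - x) - al| ≤ ε) (hfq : |(fq - f₀) / (t - x) - au| ≤ ε)
    (hgq : |(gq - g₀) / (t - x) - al| ≤ ε) (hgp : |(gp - g₀) / (t - x) - au| ≤ ε)
    (heqp : α * fp + β * gp = c + dp) (heqq : α * fq + β * gq = c + dq)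
    (hμ1 : |α| + |β| ≤ μ) (hμ2 : 1 ≤ μ * |α - β|) :
    au - al ≤ 2 * μ * (1 + μ) * ε := by
  have hD : (0:ℝ) < t - x := by linarith
  set A : ℝ := (fp - fq) / (t - x) with hAdef
  set B : ℝ := (gp - gq) / (t - x) with hBdef
  have hA : |A + (au - al)| ≤ 2 * ε := by
    have h : A + (au - al) = ((fp - f₀) / (t - x) - al) - ((fq - f₀) / (t - x) - au) := by
      rw [hAdef]; field_simp; ring
    rw [h]
    calc |((fp - f₀) / (t - x) - al) - ((fq - f₀) / (t - x) - au)|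
        ≤ |(fp - f₀) / (t - x) - al| + |(fq - f₀) / (t - x) - au| := abs_sub _ _
      _ ≤ 2 * ε := by linarith
  have hB : |B - (au - al)| ≤ 2 * ε := by
    have h : B - (au - al) = ((gp - g₀) / (t - x) - au) - ((gq - g₀) / (t - x) - al) := by
      rw [hBdef]; field_simp; ring
    rw [h]
    calc |((gp - g₀) / (t - x) - au) - ((gq - g₀) / (t - x) - al)|
        ≤ |(gp - g₀) / (t - x) - au| + |(gq - g₀) / (t - x) - al| := abs_sub _ _
      _ ≤ 2 * ε := by linarith
  have hE : |α * A + β * B| ≤ 2 * ε := by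
    have h : α * A + β * B = (dp - dq) / (t - x) := by
      rw [hAdef, hBdef]; field_simp; linarith [heqp, heqq]
    rw [h, abs_div, abs_of_pos hD, div_le_iff₀ hD]
    calc |dp - dq| ≤ |dp| + |dq| := abs_sub _ _
      _ ≤ 2 * ε * (t - x) := by linarith
  have key : |α - β| * (au - al) ≤ 2 * ε * (1 + μ) := by
    have h : (β - α) * (au - al) = (α * A + β * B) - α * (A + (au - al)) - β * (B - (au - al)) := by
      ring
    have h1 : |(β - α) * (au - al)| ≤ |α * A + β * B| + |α| * |A + (au - al)| + |β| * |B - (au - al)| := by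
      rw [h]
      calc |(α * A + β * B) - α * (A + (au - al)) - β * (B - (au - al))|
          ≤ |(α * A + β * B) - α * (A + (au - al))| + |β * (B - (au - al))| := abs_sub _ _
        _ ≤ |α * A + β * B| + |α * (A + (au - al))| + |β * (B - (au - al))| := by
            linarith [abs_sub (α * A + β * B) (α * (A + (au - al)))]
        _ = |α * A + β * B| + |α| * |A + (au - al)| + |β| * |B - (au - al)| := by
            rw [abs_mul, abs_mul]
    have h2 : |(β - α) * (au - al)| = |α - β| * (au - al) := by
      rw [abs_mul, abs_of_nonneg (by linarith : (0:ℝ) ≤ au - al), abs_sub_comm]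
    nlinarith [abs_nonneg α, abs_nonneg β, mul_le_mul_of_nonneg_left hA (abs_nonneg α),
      mul_le_mul_of_nonneg_left hB (abs_nonneg β)]
  nlinarith [mul_le_mul_of_nonneg_left key (le_of_lt hμ), abs_nonneg (α - β),
    mul_nonneg (le_of_lt hμ) (abs_nonneg (α - β))]
end
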